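/- arXiv:1802.03519 — 2 statements merged into one kernel-verified Lean document; each statement's English description precedes it below -/
import Mathlib

section
/- Let T be a bounded operator on a normed space X, let λ be a nonzero eigenvalue of the adjoint T* with eigenvector f ∈ X*, and let y be a supercyclic vector for T. Then f(y) ≠ 0, and for every x ∈ X with f(x) ≠ 0 there is a subsequence (n_k) such that (f(x)/f(y)) λ^{-n_k} T^{n_k} y converges in norm to x; in particular λ^{-n_k} T^{n_k} y → y for some subsequence. -/
open Filter Topology

variable {X : Type*} [NormedAddCommGroup X] [NormedSpace ℂ X]

/-- The projective orbit of `y` under `T`. -/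
def projOrbit (T : X →L[ℂ] X) (y : X) : Set X :=
  {z | ∃ (α : ℂ) (n : ℕ), z = α • (T ^ n) y}

/-- If `λ ≠ 0` is an eigenvalue of `T*` with eigenvector `f` and `y` is a
supercyclic vector for `T`, then `f y ≠ 0`; for every `x` with `f x ≠ 0` there is a
subsequence `n_k` with `(f x / f y) • λ^{-n_k} • T^{n_k} y → x` in norm; in particular
`λ^{-n_k} • T^{n_k} y → y` for some subsequence. -/
theorem supercyclic_adjoint_eigenvalue
    (T : X →L[ℂ] X) (l : ℂ) (hl : l ≠ 0)
    (f : StrongDual ℂ X) (hf : f ≠ 0) (heig : ∀ x : X, f (T x) = l * f x)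
    (y : X) (hy : Dense (projOrbit T y)) :
    f y ≠ 0 ∧
    (∀ x : X, f x ≠ 0 → ∃ n : ℕ → ℕ, StrictMono n ∧
      Tendsto (fun k => (f x / f y) • (l ^ n k)⁻¹ • (T ^ n k) y) atTop (nhds x)) ∧
    (∃ n : ℕ → ℕ, StrictMono n ∧
      Tendsto (fun k => (l ^ n k)⁻¹ • (T ^ n k) y) atTop (nhds y)) := by
  -- `f (T^n z) = l^n * f z`
  have key : ∀ (n : ℕ) (z : X), f ((T ^ n) z) = l ^ n * f z := by
    intro n
    induction n with
    | zero => simp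
    | succ n ih =>
      intro z
      have h1 : (T ^ (n + 1)) z = (T ^ n) (T z) := by
        rw [pow_succ, ContinuousLinearMap.mul_apply]
      rw [h1, ih, heig, pow_succ]; ring
  -- `f y ≠ 0`
  have hfy : f y ≠ 0 := by
    intro hfy0
    apply hf
    have hsub : projOrbit T y ⊆ {z : X | f z = 0} := by
      rintro z ⟨α, n, rfl⟩
      rw [Set.mem_setOf_eq, map_smul, key, hfy0]; simp
    have hcl : IsClosed {z : X | f z = 0} := isClosed_eq f.continuous continuous_const
    have hall : ∀ z : X, f z = 0 := by
      intro z
      have : z ∈ closure (projOrbit T y) := by rw [hy.closure_eq]; trivial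
      exact hcl.closure_subset_iff.mpr hsub this
    ext z; simp [hall z]
  -- main part
  have part2 : ∀ x : X, f x ≠ 0 → ∃ n : ℕ → ℕ, StrictMono n ∧
      Tendsto (fun k => (f x / f y) • (l ^ n k)⁻¹ • (T ^ n k) y) atTop (nhds x) := by
    intro x hx
    by_cases hker : ∀ z : X, f z = 0 → z = 0
    · -- `f` is injective: everything is a multiple of `y`
      have hyv : ∀ m : ℕ, (l ^ m)⁻¹ • (T ^ m) y = y := by
        intro m
        have h0 : f ((l ^ m)⁻¹ • (T ^ m) y - y) = 0 := by
          rw [map_sub, map_smul, key, smul_eq_mul,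
            inv_mul_cancel_left₀ (pow_ne_zero m hl), sub_self]
        exact sub_eq_zero.mp (hker _ h0)
      have hxy : (f x / f y) • y = x := by
        have : f ((f x / f y) • y - x) = 0 := by
          simp [smul_eq_mul, div_mul_cancel₀ _ hfy]
        exact sub_eq_zero.mp (hker _ this)
      refine ⟨id, strictMono_id, ?_⟩
      have hconst : (fun k : ℕ => (f x / f y) • (l ^ (id k))⁻¹ • (T ^ (id k)) y)
          = fun _ => x := funext fun k => by rw [id, hyv, hxy]
      rw [hconst]
      exact tendsto_const_nhds
    · -- there is a nonzero kernel vector; then singleton spans are nowhere dense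
      push_neg at hker
      obtain ⟨z, hz0, hzne⟩ := hker
      have hspan_ne_top : ∀ w : X, (Submodule.span ℂ {w} : Submodule ℂ X) ≠ ⊤ := by
        intro w hw
        obtain ⟨a, ha⟩ := Submodule.mem_span_singleton.mp
          (hw ▸ Submodule.mem_top : z ∈ Submodule.span ℂ {w})
        obtain ⟨b, hb⟩ := Submodule.mem_span_singleton.mp
          (hw ▸ Submodule.mem_top : x ∈ Submodule.span ℂ {w})
        have hfw : f w ≠ 0 := by
          intro h0
          apply hx
          rw [← hb, map_smul, smul_eq_mul, h0, mul_zero]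
        have ha0 : a = 0 := by
          have := hz0
          rw [← ha, map_smul, smul_eq_mul] at this
          exact (mul_eq_zero.mp this).resolve_right hfw
        exact hzne (by rw [← ha, ha0, zero_smul])
      haveI : NeBot (𝓝[{ c : ℂ | IsUnit c }] 0) := NormedField.nhdsWithin_isUnit_neBot
      have hdense_compl : ∀ w : X,
          Dense (((Submodule.span ℂ {w} : Submodule ℂ X) : Set X))ᶜ := by
        intro w
        rw [← interior_eq_empty_iff_dense_compl]
        by_contra h
        exact hspan_ne_top w ((Submodule.span ℂ {w}).eq_top_of_nonempty_interior'
          (Set.nonempty_iff_ne_empty.mpr h))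
      have hclosed : ∀ w : X,
          IsClosed (((Submodule.span ℂ {w} : Submodule ℂ X) : Set X)) := fun w =>
        Submodule.closed_of_finiteDimensional _
      -- the finite intersections of the complements are open and dense
      set S : ℕ → Set X := fun m =>
        (((Submodule.span ℂ {(T ^ m) y} : Submodule ℂ X) : Set X))ᶜ with hS
      have hSopen : ∀ m, IsOpen (S m) := fun m => (hclosed _).isOpen_compl
      have hSdense : ∀ m, Dense (S m) := fun m => hdense_compl _
      have hU : ∀ N : ℕ, Dense (⋂ m ∈ Finset.range N, S m) ∧
          IsOpen (⋂ m ∈ Finset.range N, S m) := by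
        intro N
        induction N with
        | zero => exact ⟨by simp, by simp⟩
        | succ N ih =>
          rw [Finset.range_add_one]
          rw [Finset.set_biInter_insert]
          exact ⟨(hSdense N).inter_of_isOpen_left ih.1 (hSopen N),
            (hSopen N).inter ih.2⟩
      -- approximation with arbitrarily large exponent
      have happrox : ∀ (N k : ℕ), ∃ p : ℂ × ℕ, N ≤ p.2 ∧ p.1 ≠ 0 ∧
          ‖p.1 • (T ^ p.2) y - x‖ < 1 / (k + 1) := by
        intro N k
        have hεpos : (0 : ℝ) < 1 / (k + 1) := by positivity
        set U := ⋂ m ∈ Finset.range (N + 1), S m with hUdef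
        have hVopen : IsOpen (U ∩ Metric.ball x (1 / (k + 1))) :=
          (hU (N + 1)).2.inter Metric.isOpen_ball
        have hVne : (U ∩ Metric.ball x (1 / (k + 1))).Nonempty := by
          obtain ⟨u, hu1, hu2⟩ := (hU (N + 1)).1.exists_mem_open Metric.isOpen_ball
            ⟨x, Metric.mem_ball_self hεpos⟩
          exact ⟨u, hu1, hu2⟩
        obtain ⟨q, hqV, hqO⟩ := hy.inter_open_nonempty _ hVopen hVne
        obtain ⟨α, n, rfl⟩ := hqO
        have hqU : ∀ m, m < N + 1 → α • (T ^ n) y ∈ S m := by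
          intro m hm
          exact Set.mem_iInter₂.mp hqV.1 m (Finset.mem_range.mpr hm)
        have hα : α ≠ 0 := fun h0 => hqU 0 (Nat.succ_pos N)
          (by rw [h0, zero_smul]; exact (Submodule.span ℂ _).zero_mem)
        have hn : N + 1 ≤ n := by
          by_contra h
          push_neg at h
          exact hqU n h (Submodule.mem_span_singleton.mpr ⟨α, rfl⟩)
        refine ⟨(α, n), le_trans (Nat.le_succ N) hn, hα, ?_⟩
        simpa [dist_eq_norm] using hqV.2
      choose G hG1 hG2 hG3 using happrox
      -- build the strictly monotone sequence recursively
      set s : ℕ → ℂ × ℕ := fun k =>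
        Nat.rec (G 0 0) (fun k p => G (p.2 + 1) (k + 1)) k with hs
      set n : ℕ → ℕ := fun k => (s k).2 with hn
      set α : ℕ → ℂ := fun k => (s k).1 with hα
      have hsucc : ∀ k, s (k + 1) = G ((s k).2 + 1) (k + 1) := fun k => rfl
      have hmono : StrictMono n := by
        apply strictMono_nat_of_lt_succ
        intro k
        show (s k).2 < (s (k + 1)).2
        calc (s k).2 < (s k).2 + 1 := Nat.lt_succ_self _
          _ ≤ (s (k + 1)).2 := by rw [hsucc]; exact hG1 _ _
      have hαne : ∀ k, α k ≠ 0 := by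
        intro k
        cases k with
        | zero => exact hG2 0 0
        | succ k => exact hG2 ((s k).2 + 1) (k + 1)
      have hbound : ∀ k : ℕ, ‖α k • (T ^ n k) y - x‖ < 1 / (k + 1) := by
        intro k
        cases k with
        | zero => exact hG3 0 0
        | succ k => exact hG3 ((s k).2 + 1) (k + 1)
      set w : ℕ → X := fun k => α k • (T ^ n k) y with hw
      have htends : Tendsto w atTop (𝓝 x) := by
        rw [tendsto_iff_norm_sub_tendsto_zero]
        apply squeeze_zero (fun k => norm_nonneg _) (fun k => le_of_lt (hbound k))
        exact tendsto_one_div_add_atTop_nhds_zero_nat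
      have hfw : ∀ k, f (w k) = α k * (l ^ n k * f y) := by
        intro k
        rw [hw]
        simp only [map_smul, smul_eq_mul, key]
      have hfwne : ∀ k, f (w k) ≠ 0 := fun k => by
        rw [hfw]
        exact mul_ne_zero (hαne k) (mul_ne_zero (pow_ne_zero _ hl) hfy)
      have hcf : Tendsto (fun k => f (w k)) atTop (𝓝 (f x)) :=
        (f.continuous.tendsto x).comp htends
      have heqn : ∀ k, (f x / f (w k)) • w k
          = (f x / f y) • (l ^ n k)⁻¹ • (T ^ n k) y := by
        intro k
        have hwk : w k = α k • (T ^ n k) y := rfl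
        rw [hwk, smul_smul, smul_smul]
        congr 1
        rw [map_smul, smul_eq_mul, key]
        have h1 := hαne k
        have h2 : l ^ n k ≠ 0 := pow_ne_zero _ hl
        field_simp
      have hfin : Tendsto (fun k => (f x / f (w k)) • w k) atTop (𝓝 x) := by
        have h1 : Tendsto (fun k => f x / f (w k)) atTop (𝓝 (f x / f x)) :=
          tendsto_const_nhds.div hcf hx
        rw [div_self hx] at h1
        have := h1.smul htends
        rwa [one_smul] at this
      refine ⟨n, hmono, ?_⟩
      have : (fun k => (f x / f y) • (l ^ n k)⁻¹ • (T ^ n k) y)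
          = fun k => (f x / f (w k)) • w k := funext fun k => (heqn k).symm
      rw [this]
      exact hfin
  refine ⟨hfy, part2, ?_⟩
  obtain ⟨n, hmono, ht⟩ := part2 y hfy
  refine ⟨n, hmono, ?_⟩
  have heq : (fun k => (f y / f y) • (l ^ n k)⁻¹ • (T ^ n k) y)
      = fun k => (l ^ n k)⁻¹ • (T ^ n k) y := by
    funext k; rw [div_self hfy, one_smul]
  rwa [heq] at ht
end

section
/- If T is a compact operator on a normed space and x_k → x in norm, and for each k there are scalars α_j(k) and indices n_j with α_j(k) T^{n_j} y ⇀ x_k weakly, then there exist scalars β_i and indices m_i with β_i T^{m_i} y → x in norm (a diagonal extraction through the compactness of T). -/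
open Filter Topology

variable {X : Type*} [NormedAddCommGroup X] [NormedSpace ℂ X]

/-- Weak convergence of a sequence. -/
def WeaklyConvSeq (u : ℕ → X) (x : X) : Prop :=
  ∀ f : StrongDual ℂ X, Tendsto (fun k => f (u k)) atTop (nhds (f x))

open NormedSpace in
/-- A weakly convergent sequence is norm-bounded (Banach–Steinhaus). -/
lemma WeaklyConvSeq.bounded {u : ℕ → X} {x : X} (hu : WeaklyConvSeq u x) :
    ∃ M : ℝ, ∀ j, ‖u j‖ ≤ M := by
  set g : ℕ → StrongDual ℂ X →L[ℂ] ℂ := fun j => inclusionInDoubleDual ℂ X (u j) with hg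
  have hb : ∀ f : StrongDual ℂ X, ∃ C, ∀ j, ‖g j f‖ ≤ C := by
    intro f
    have := ((hu f).norm).bddAbove_range
    obtain ⟨C, hC⟩ := this
    exact ⟨C, fun j => hC (Set.mem_range_self j)⟩
  obtain ⟨C', hC'⟩ := banach_steinhaus hb
  refine ⟨C', fun j => ?_⟩
  have : ‖g j‖ = ‖u j‖ := by
    exact (inclusionInDoubleDualLi ℂ (E := X)).norm_map (u j)
  rw [← this]; exact hC' j

/-- Compactness upgrades weak convergence to norm approximation after applying `T`. -/
lemma approx_of_weak (T : X →L[ℂ] X) (hT : IsCompactOperator T) (y : X) (z : X)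
    (h : ∃ (α : ℕ → ℂ) (n : ℕ → ℕ), StrictMono n ∧
      WeaklyConvSeq (fun j => α j • (T ^ n j) y) z) :
    ∀ ε > 0, ∃ (β : ℂ) (m : ℕ), ‖β • (T ^ m) y - T z‖ < ε := by
  obtain ⟨α, n, -, hw⟩ := h
  intro ε hε
  set u : ℕ → X := fun j => α j • (T ^ n j) y with hu
  obtain ⟨M, hM⟩ := hw.bounded
  have hbdd : Bornology.IsBounded (Metric.closedBall (0 : X) M) := Metric.isBounded_closedBall
  obtain ⟨K, hK, hTK⟩ := hT.image_subset_compact_of_bounded hbdd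
  have hmem : ∀ j, T (u j) ∈ K := fun j =>
    hTK ⟨u j, by simpa [Metric.mem_closedBall] using hM j, rfl⟩
  obtain ⟨w, -, φ, hφ, hlim⟩ := hK.tendsto_subseq hmem
  have hwz : w = T z := by
    rw [NormedSpace.eq_iff_forall_dual_eq ℂ]
    intro f
    have h1 : Tendsto (fun i => f (T (u (φ i)))) atTop (𝓝 (f w)) :=
      (f.continuous.tendsto w).comp hlim
    have h2 : Tendsto (fun j => (f.comp T) (u j)) atTop (𝓝 ((f.comp T) z)) := hw (f.comp T)
    have h3 : Tendsto (fun i => (f.comp T) (u (φ i))) atTop (𝓝 ((f.comp T) z)) :=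
      h2.comp hφ.tendsto_atTop
    exact tendsto_nhds_unique h1 h3
  rw [hwz] at hlim
  have := (Metric.tendsto_atTop.mp hlim) ε hε
  obtain ⟨N, hN⟩ := this
  refine ⟨α (φ N), n (φ N) + 1, ?_⟩
  have hTu : T (u (φ N)) = α (φ N) • (T ^ (n (φ N) + 1)) y := by
    simp [hu, pow_succ', ContinuousLinearMap.mul_apply]
  have := hN N le_rfl
  rw [dist_eq_norm] at this
  simpa [Function.comp, hTu] using this

/-- (Diagonal extraction through compactness.) Let `T` be compact,
`T x_k → x` in norm, and suppose for each `k` there are scalars `α_j` and a strictly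
increasing sequence of exponents `n_j` with `α_j • T^{n_j} y ⇀ x_k` weakly. Then there are
scalars `β_i` and exponents `m_i` with `β_i • T^{m_i} y → x` in norm. -/
theorem compact_diagonal_extraction
    (T : X →L[ℂ] X) (hT : IsCompactOperator T) (y x : X) (xseq : ℕ → X)
    (hx : Tendsto (fun k => T (xseq k)) atTop (nhds x))
    (hweak : ∀ k : ℕ, ∃ (α : ℕ → ℂ) (n : ℕ → ℕ), StrictMono n ∧
      WeaklyConvSeq (fun j => α j • (T ^ n j) y) (xseq k)) :
    ∃ (β : ℕ → ℂ) (m : ℕ → ℕ),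
      Tendsto (fun i => β i • (T ^ m i) y) atTop (nhds x) := by
  have key : ∀ k : ℕ, ∃ (β : ℂ) (m : ℕ),
      ‖β • (T ^ m) y - T (xseq k)‖ < 1 / (k + 1) := fun k =>
    approx_of_weak T hT y (xseq k) (hweak k) (1 / (k + 1)) (by positivity)
  choose β m hβm using key
  refine ⟨β, m, ?_⟩
  have h0 : Tendsto (fun k => β k • (T ^ m k) y - T (xseq k)) atTop (𝓝 0) := by
    have hsq : Tendsto (fun k : ℕ => 1 / ((k : ℝ) + 1)) atTop (𝓝 0) :=
      tendsto_one_div_add_atTop_nhds_zero_nat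
    refine squeeze_zero_norm (fun k => (hβm k).le) hsq
  have := h0.add hx
  simpa using this
end
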